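/- For every α ∈ (0,1) and A > 0 there exists a constant R = R(α,A) > 0 such that for every integer n ≥ 1, every integer N ≥ 1, every u ∈ [−2+α, 2−α], all t₁,…,t_n ∈ [−A,A], and every H ∈ ℝ, one has N^{−n}·| det( K̃_N( u+t_i/N, u+t_j/N, 1/((1+iH)·N) ) )_{i,j=1}^n | ≤ n!·((N−1)!)ⁿ·R^{nN}·(1+H²)^{n(N+1/4)}. (The left-hand side is N^{−n} times the modulus of the analytic continuation in the parameter s, to s = 1/((1+iH)N), of the n-point GUE correlation function R_{n,N}^{GUE,s}(u+t₁/N,…,u+t_n/N) = det( K̃_N(u+t_i/N, u+t_j/N, s) )_{i,j=1}^n.) -/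

import Mathlib

open Real

noncomputable section

/-- The monic (probabilists') Hermite polynomial, evaluated at a complex number. -/
def hermiteH (k : ℕ) (z : ℂ) : ℂ := Polynomial.aeval z (Polynomial.hermite k)

/-- The normalized Hermite polynomial `p_k = H_k / ((2π)^{1/4} (k!)^{1/2})`. -/
def hermiteP (k : ℕ) (z : ℂ) : ℂ :=
  hermiteH k z / (((2 * π) ^ ((1:ℝ)/4) * Real.sqrt (Nat.factorial k) : ℝ) : ℂ)

/-- The Hermite function `φ_k(z) = p_k(z) exp(−z²/4)`. -/
def hermitePhi (k : ℕ) (z : ℂ) : ℂ := hermiteP k z * Complex.exp (-(z ^ 2) / 4)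

/-- The Hermite reproducing kernel `K_N(z₁,z₂) = Σ_{k<N} φ_k(z₁) φ_k(z₂)`. -/
def kernelK (N : ℕ) (z₁ z₂ : ℂ) : ℂ :=
  ∑ k ∈ Finset.range N, hermitePhi k z₁ * hermitePhi k z₂

/-- The rescaled kernel `K̃_N(z₁,z₂,s) = s^{−1/2} K_N(z₁ s^{−1/2}, z₂ s^{−1/2})`
(principal powers). -/
def kernelKt (N : ℕ) (z₁ z₂ s : ℂ) : ℂ :=
  s ^ (-(1:ℂ)/2) * kernelK N (z₁ * s ^ (-(1:ℂ)/2)) (z₂ * s ^ (-(1:ℂ)/2))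

/-- `d(H) = √(1+iH)`, the principal square root. -/
def dC (H : ℝ) : ℂ := (1 + H * Complex.I) ^ ((1:ℂ)/2)

/-- The closed strip `S̄_{α,β} = {z : |Re z| ≤ 2−α, |Im z| ≤ β}`. -/
def Sbar (α β : ℝ) : Set ℂ := {z : ℂ | |z.re| ≤ 2 - α ∧ |z.im| ≤ β}

/-- The Wigner semicircle density. -/
def wigner (x : ℝ) : ℝ := (2 * π)⁻¹ * Real.sqrt (4 - x ^ 2)

/-- The analytic continuation of the Wigner density,
`w(z) = (2π)⁻¹ (2−z)^{1/2} (2+z)^{1/2}` (principal powers). -/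
def wignerC (z : ℂ) : ℂ :=
  (((2 * π)⁻¹ : ℝ) : ℂ) * ((2 - z) ^ ((1:ℂ)/2) * (2 + z) ^ ((1:ℂ)/2))

/-! ### Auxiliary lemmas -/

theorem derivative_hermite' (n : ℕ) :
    Polynomial.derivative (Polynomial.hermite (n+1)) = ((n:ℤ)+1) • Polynomial.hermite n := by
  induction n with
  | zero => simp [Polynomial.hermite_one]
  | succ n ih =>
    rw [Polynomial.hermite_succ (n+1), Polynomial.derivative_sub, Polynomial.derivative_mul,
      Polynomial.derivative_X, one_mul, ih, Polynomial.derivative_smul,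
      Polynomial.hermite_succ n]
    push_cast
    simp only [Polynomial.smul_eq_C_mul, map_add, map_one]
    ring

theorem hermiteH_rec (n : ℕ) (z : ℂ) :
    hermiteH (n+2) z = z * hermiteH (n+1) z - ((n:ℂ)+1) * hermiteH n z := by
  unfold hermiteH
  rw [Polynomial.hermite_succ (n+1), map_sub, map_mul, Polynomial.aeval_X, derivative_hermite']
  simp [zsmul_eq_mul]

theorem hermiteH_abs_le (r : ℝ) (hr : 0 ≤ r) (w : ℂ) (hw : ‖w‖ ≤ r) (k : ℕ) :
    ‖hermiteH k w‖ ≤ (r+1)^k * Real.sqrt (Nat.factorial k) := by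
  induction k using Nat.strong_induction_on with
  | _ k ih =>
  match k with
  | 0 => simp [hermiteH]
  | 1 =>
    simp only [hermiteH, Polynomial.hermite_one, Polynomial.aeval_X]
    calc ‖w‖ ≤ r := hw
    _ ≤ (r+1)^1 * Real.sqrt (Nat.factorial 1) := by simp
  | (k+2) =>
    have h1 := ih (k+1) (by omega)
    have h0 := ih k (by omega)
    rw [hermiteH_rec]
    have hs0 := Real.sqrt_nonneg ((k:ℝ)+1)
    have hs0' := Real.sqrt_nonneg ((k:ℝ)+2)
    have hsq : Real.sqrt ((k:ℝ)+1) * Real.sqrt ((k:ℝ)+1) = (k:ℝ)+1 :=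
      Real.mul_self_sqrt (by positivity)
    have s1 : 1 ≤ Real.sqrt ((k:ℝ)+1) := by nlinarith
    have s1' : Real.sqrt ((k:ℝ)+1) ≤ (k:ℝ)+1 := by nlinarith
    have s12 : ((k:ℝ)+1) ≤ Real.sqrt ((k:ℝ)+1) * Real.sqrt ((k:ℝ)+2) := by
      have : Real.sqrt ((k:ℝ)+1) ≤ Real.sqrt ((k:ℝ)+2) := Real.sqrt_le_sqrt (by linarith)
      nlinarith
    have fs1 : Real.sqrt (Nat.factorial (k+1)) =
        Real.sqrt (Nat.factorial k) * Real.sqrt ((k:ℝ)+1) := by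
      rw [← Real.sqrt_mul (by positivity)]
      congr 1
      rw [Nat.factorial_succ]; push_cast; ring
    have fs2 : Real.sqrt (Nat.factorial (k+2)) =
        Real.sqrt (Nat.factorial k) * (Real.sqrt ((k:ℝ)+1) * Real.sqrt ((k:ℝ)+2)) := by
      have h : ((Nat.factorial (k+2)) : ℝ) = (Nat.factorial k : ℝ) * (((k:ℝ)+1)*((k:ℝ)+2)) := by
        rw [Nat.factorial_succ, Nat.factorial_succ]; push_cast; ring
      rw [h, Real.sqrt_mul (by positivity), Real.sqrt_mul (by positivity)]
    have hk1 : ‖(k:ℂ)+1‖ = (k:ℝ)+1 := by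
      rw [show ((k:ℂ)+1) = (((k+1:ℝ)):ℂ) by push_cast; ring, Complex.norm_real, Real.norm_eq_abs,
        abs_of_nonneg (by positivity)]
    have ha : ‖w * hermiteH (k+1) w - ((k:ℂ)+1) * hermiteH k w‖
        ≤ r * ((r+1)^(k+1) * Real.sqrt (Nat.factorial (k+1)))
          + ((k:ℝ)+1) * ((r+1)^k * Real.sqrt (Nat.factorial k)) := by
      refine le_trans (norm_sub_le _ _) ?_
      rw [norm_mul, norm_mul, hk1]
      gcongr
    refine ha.trans ?_
    rw [fs1, fs2, pow_succ, pow_succ, pow_succ]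
    have ha0 : 0 ≤ Real.sqrt (Nat.factorial k) := Real.sqrt_nonneg _
    have hc0 : 0 ≤ (r+1)^k := by positivity
    nlinarith [mul_nonneg hc0 ha0, mul_nonneg (mul_nonneg hc0 ha0) hr,
      mul_nonneg (mul_nonneg hc0 ha0) hs0,
      mul_nonneg (mul_nonneg (mul_nonneg hc0 ha0) hr) hs0,
      mul_le_mul_of_nonneg_left s12 (mul_nonneg (mul_nonneg hc0 ha0) (mul_nonneg hr hr)),
      mul_le_mul_of_nonneg_left s12 (mul_nonneg hc0 ha0),
      mul_le_mul_of_nonneg_left s1' (mul_nonneg (mul_nonneg hc0 ha0) hr)]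

theorem hermitePhi_abs_le (r : ℝ) (hr : 0 ≤ r) (w : ℂ) (hw : ‖w‖ ≤ r)
    (hre : (-(w^2)/4).re ≤ 0) (k : ℕ) :
    ‖hermitePhi k w‖ ≤ (r+1)^k := by
  have hsf : 0 < Real.sqrt (Nat.factorial k) := by
    apply Real.sqrt_pos.mpr; exact_mod_cast Nat.factorial_pos k
  have hd1 : 1 ≤ (2 * π) ^ ((1:ℝ)/4) := by
    apply Real.one_le_rpow (by nlinarith [Real.pi_gt_three]) (by norm_num)
  have hexp : ‖Complex.exp (-(w^2)/4)‖ ≤ 1 := by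
    rw [Complex.norm_exp]
    exact Real.exp_le_one_iff.mpr hre
  have hP : ‖hermiteP k w‖ ≤ (r+1)^k := by
    unfold hermiteP
    rw [norm_div, Complex.norm_real, Real.norm_eq_abs, abs_of_pos (by positivity)]
    rw [div_le_iff₀ (by positivity)]
    calc ‖hermiteH k w‖ ≤ (r+1)^k * Real.sqrt (Nat.factorial k) :=
          hermiteH_abs_le r hr w hw k
    _ ≤ (r+1)^k * ((2*π) ^ ((1:ℝ)/4) * Real.sqrt (Nat.factorial k)) := by
        rw [mul_le_mul_iff_right₀ (by positivity)]
        nlinarith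
  calc ‖hermitePhi k w‖
      = ‖hermiteP k w‖ * ‖Complex.exp (-(w^2)/4)‖ := by
        unfold hermitePhi; rw [norm_mul]
  _ ≤ (r+1)^k * 1 := mul_le_mul hP hexp (norm_nonneg _) (by positivity)
  _ = (r+1)^k := mul_one _

theorem kernelK_abs_le (N : ℕ) (r : ℝ) (hr : 0 ≤ r) (w₁ w₂ : ℂ)
    (hw₁ : ‖w₁‖ ≤ r) (hw₂ : ‖w₂‖ ≤ r)
    (hre₁ : (-(w₁^2)/4).re ≤ 0) (hre₂ : (-(w₂^2)/4).re ≤ 0) :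
    ‖kernelK N w₁ w₂‖ ≤ N * (r+1)^(2*N) := by
  unfold kernelK
  calc ‖∑ k ∈ Finset.range N, hermitePhi k w₁ * hermitePhi k w₂‖
      ≤ ∑ k ∈ Finset.range N, ‖hermitePhi k w₁ * hermitePhi k w₂‖ :=
        norm_sum_le _ _
  _ ≤ ∑ k ∈ Finset.range N, (r+1)^(2*N) := by
      apply Finset.sum_le_sum
      intro k hk
      rw [norm_mul]
      have hk' : k + k ≤ 2*N := by
        have := Finset.mem_range.mp hk; omega
      calc ‖hermitePhi k w₁‖ * ‖hermitePhi k w₂‖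
          ≤ (r+1)^k * (r+1)^k :=
            mul_le_mul (hermitePhi_abs_le r hr w₁ hw₁ hre₁ k)
              (hermitePhi_abs_le r hr w₂ hw₂ hre₂ k) (norm_nonneg _) (by positivity)
      _ = (r+1)^(k+k) := by rw [pow_add]
      _ ≤ (r+1)^(2*N) := pow_le_pow_right₀ (by linarith) hk'
  _ = N * (r+1)^(2*N) := by rw [Finset.sum_const, Finset.card_range, nsmul_eq_mul]

theorem pow_self_le_aux (N : ℕ) : (N:ℝ)^N ≤ 3^N * (Nat.factorial N) := by
  induction N with
  | zero => norm_num
  | succ N ih =>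
    have key : ((N:ℝ)+1)^N ≤ 3^(N+1) * Nat.factorial N := by
      rcases Nat.eq_zero_or_pos N with h | h
      · subst h; norm_num
      · have hN : (0:ℝ) < N := by exact_mod_cast h
        have h1 : ((N:ℝ)+1) ≤ N * Real.exp (1/N) := by
          have := Real.add_one_le_exp (1/(N:ℝ))
          calc ((N:ℝ)+1) = N * (1/N + 1) := by field_simp; ring
          _ ≤ N * Real.exp (1/N) := by nlinarith
        have h2 : ((N:ℝ)+1)^N ≤ (N * Real.exp (1/N))^N :=
          pow_le_pow_left₀ (by positivity) h1 N
        have h3 : (N * Real.exp (1/N))^N = (N:ℝ)^N * Real.exp 1 := by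
          rw [mul_pow, ← Real.exp_nat_mul]
          congr 2
          field_simp
        have h4 : Real.exp 1 ≤ 3 := by
          have := Real.exp_one_lt_d9
          linarith
        calc ((N:ℝ)+1)^N ≤ (N:ℝ)^N * Real.exp 1 := by rw [← h3]; exact h2
        _ ≤ (N:ℝ)^N * 3 := by nlinarith [pow_nonneg hN.le N]
        _ ≤ (3^N * Nat.factorial N) * 3 := by nlinarith [ih]
        _ = 3^(N+1) * Nat.factorial N := by ring
    push_cast
    calc ((N:ℝ)+1)^(N+1) = ((N:ℝ)+1) * ((N:ℝ)+1)^N := by ring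
    _ ≤ ((N:ℝ)+1) * (3^(N+1) * Nat.factorial N) :=
        mul_le_mul_of_nonneg_left key (by positivity)
    _ = 3^(N+1) * (((N:ℝ)+1) * Nat.factorial N) := by ring
    _ = 3^(N+1) * (Nat.factorial (N+1)) := by
        rw [Nat.factorial_succ]; push_cast; ring

theorem sq_le_four_pow_aux (N : ℕ) : ((N:ℝ))^2 ≤ 4^N := by
  have h : (N:ℝ) ≤ 2^N := by
    exact_mod_cast (Nat.lt_two_pow_self (n := N)).le
  calc ((N:ℝ))^2 ≤ (2^N)^2 := by nlinarith [Nat.cast_nonneg (α := ℝ) N]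
  _ = 4^N := by rw [← pow_mul, show (4:ℝ) = 2^2 by norm_num, ← pow_mul]; ring_nf

set_option maxHeartbeats 1000000 in
theorem gue_correlation_bound_complex :
    ∀ α ∈ Set.Ioo (0:ℝ) 1, ∀ A : ℝ, 0 < A → ∃ R : ℝ, 0 < R ∧
      ∀ n : ℕ, 1 ≤ n → ∀ N : ℕ, 1 ≤ N → ∀ u ∈ Set.Icc (-2 + α) (2 - α),
        ∀ t : Fin n → ℝ, (∀ i, t i ∈ Set.Icc (-A) A) → ∀ H : ℝ,
          (N : ℝ) ^ (-(n : ℝ)) *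
            ‖Matrix.det fun i j : Fin n =>
              kernelKt N ((u + t i / N : ℝ) : ℂ) ((u + t j / N : ℝ) : ℂ)
                (((1 + H * Complex.I) * N)⁻¹)‖ ≤
          (Nat.factorial n) * ((Nat.factorial (N - 1)) : ℝ) ^ n * R ^ (n * N) *
            (1 + H ^ 2) ^ ((n : ℝ) * ((N : ℝ) + 1/4)) := by
  intro α hα A hA
  refine ⟨12*(3+A)^2, by positivity, ?_⟩
  intro n hn N hN u hu t ht H
  have hNR : (1:ℝ) ≤ N := by exact_mod_cast hN
  have hNpos : (0:ℝ) < N := by linarith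
  set s : ℂ := ((1 + (H:ℂ) * Complex.I) * (N:ℂ))⁻¹ with hs_def
  have hbase : (1 + (H:ℂ)*Complex.I) ≠ 0 := by
    intro h
    have := congrArg Complex.re h
    simp at this
  have hNne : ((N:ℂ)) ≠ 0 := by
    simp only [ne_eq, Nat.cast_eq_zero]
    omega
  have hs : s ≠ 0 := by
    rw [hs_def]
    exact inv_ne_zero (mul_ne_zero hbase hNne)
  set q : ℂ := s ^ (-(1:ℂ)/2) with hq_def
  have h1H : (1:ℝ) ≤ 1 + H^2 := by nlinarith
  have habs1 : ‖1 + (H:ℂ)*Complex.I‖ = Real.sqrt (1+H^2) := by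
    rw [Complex.norm_def, Complex.normSq_apply]
    simp
    ring_nf
  set y : ℝ := (1+H^2) ^ ((1:ℝ)/4) * Real.sqrt N with hy_def
  have hb1 : (1:ℝ) ≤ (1+H^2) ^ ((1:ℝ)/4) := Real.one_le_rpow h1H (by norm_num)
  have hc1 : (1:ℝ) ≤ Real.sqrt N := by
    rw [show (1:ℝ) = Real.sqrt 1 by simp]
    exact Real.sqrt_le_sqrt hNR
  have hy1 : 1 ≤ y := by nlinarith
  have hy0 : 0 ≤ y := by linarith
  have habs_s : ‖s‖ = (Real.sqrt (1+H^2) * N)⁻¹ := by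
    rw [hs_def, norm_inv, norm_mul, habs1, Complex.norm_natCast]
  have habsq : ‖q‖ = y := by
    rw [hq_def, Complex.norm_cpow_of_ne_zero hs]
    have hre : ((-(1:ℂ)/2)).re = -(1/2 : ℝ) := by norm_num
    have him : ((-(1:ℂ)/2)).im = 0 := by norm_num
    rw [hre, him, mul_zero, Real.exp_zero, div_one, habs_s]
    have hpos : (0:ℝ) < Real.sqrt (1+H^2) * N := by positivity
    rw [Real.inv_rpow hpos.le, Real.rpow_neg hpos.le, inv_inv,
      Real.mul_rpow (Real.sqrt_nonneg _) hNpos.le, hy_def,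
      Real.sqrt_eq_rpow, Real.sqrt_eq_rpow, ← Real.rpow_mul (by positivity)]
    norm_num
  have hqq : q * q = (1 + (H:ℂ)*Complex.I) * N := by
    rw [hq_def, ← Complex.cpow_add _ _ hs,
      show (-(1:ℂ)/2 + -(1:ℂ)/2) = -1 by ring, Complex.cpow_neg_one, hs_def, inv_inv]
  -- entry bound
  set B : ℝ := (2+A)*y + 1 with hB_def
  set M : ℝ := y * (N * B^(2*N)) with hM_def
  have key_entry : ∀ x : ℝ, |x| ≤ 2 + A →
      ‖(x:ℂ)*q‖ ≤ (2+A)*y ∧ (-(((x:ℂ)*q)^2)/4).re ≤ 0 := by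
    intro x hx
    constructor
    · rw [norm_mul, Complex.norm_real, Real.norm_eq_abs, habsq]
      exact mul_le_mul_of_nonneg_right hx hy0
    · have hsq2 : ((x:ℂ)*q)^2 = ((x^2:ℝ):ℂ) * ((1 + (H:ℂ)*Complex.I) * N) := by
        calc ((x:ℂ)*q)^2 = (x:ℂ)^2 * (q*q) := by ring
        _ = ((x^2:ℝ):ℂ) * ((1 + (H:ℂ)*Complex.I) * N) := by rw [hqq]; push_cast; ring
      have heq : -(((x:ℂ)*q)^2)/4 = ((-(x^2*N/4):ℝ):ℂ) * (1 + (H:ℂ)*Complex.I) := by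
        rw [hsq2]; push_cast; ring
      rw [heq]
      simp only [Complex.mul_re, Complex.ofReal_re, Complex.ofReal_im, Complex.add_re,
        Complex.add_im, Complex.one_re, Complex.one_im, Complex.mul_re, Complex.mul_im,
        Complex.I_re, Complex.I_im]
      have : 0 ≤ x^2*N/4 := by positivity
      nlinarith
  have hentry : ∀ i j : Fin n,
      ‖kernelKt N ((u + t i / N : ℝ) : ℂ) ((u + t j / N : ℝ) : ℂ)
        (((1 + (H:ℂ) * Complex.I) * (N:ℂ))⁻¹)‖ ≤ M := by
    intro i j
    have hx : ∀ i : Fin n, |u + t i / N| ≤ 2 + A := by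
      intro i
      have h1 : |u| ≤ 2 - α := abs_le.mpr ⟨by linarith [hu.1], hu.2⟩
      have h2 : |t i / N| ≤ A := by
        rw [abs_div, abs_of_pos hNpos, div_le_iff₀ hNpos]
        have := abs_le.mpr ⟨(ht i).1, (ht i).2⟩
        nlinarith [abs_nonneg (t i)]
      calc |u + t i / N| ≤ |u| + |t i / N| := abs_add_le _ _
      _ ≤ (2 - α) + A := add_le_add h1 h2
      _ ≤ 2 + A := by linarith [hα.1]
    obtain ⟨hwi, hri⟩ := key_entry _ (hx i)
    obtain ⟨hwj, hrj⟩ := key_entry _ (hx j)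
    unfold kernelKt
    rw [← hs_def, ← hq_def, norm_mul, habsq, hM_def]
    apply mul_le_mul_of_nonneg_left ?_ hy0
    have := kernelK_abs_le N ((2+A)*y) (by positivity) _ _ hwi hwj hri hrj
    rw [← hB_def] at this
    exact this
  -- determinant bound
  have hdet := Matrix.det_le (A := fun i j : Fin n =>
      kernelKt N ((u + t i / N : ℝ) : ℂ) ((u + t j / N : ℝ) : ℂ)
        (((1 + (H:ℂ) * Complex.I) * (N:ℂ))⁻¹)) (abv := IsAbsoluteValue.toAbsoluteValue (norm : ℂ → ℝ)) (x := M) hentry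
  rw [Fintype.card_fin, nsmul_eq_mul] at hdet
  -- core scalar bound
  set T : ℝ := (Nat.factorial (N-1)) * (12*(3+A)^2)^N * (1+H^2) ^ ((N:ℝ) + 1/4) with hT_def
  have hT0 : 0 ≤ T := by positivity
  have hE0 : 0 ≤ y * B^(2*N) := by positivity
  have hcore : y * B^(2*N) ≤ T := by
    have hBle : B ≤ (3+A)*y := by
      rw [hB_def]; nlinarith
    have hB0 : 0 ≤ B := by positivity
    have step1 : y * B^(2*N) ≤ y * ((3+A)*y)^(2*N) := by
      apply mul_le_mul_of_nonneg_left (pow_le_pow_left₀ hB0 hBle _) hy0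
    have step2 : y * ((3+A)*y)^(2*N) = (3+A)^(2*N) * y^(2*N+1) := by
      rw [mul_pow]; ring
    have hyexp : y^(2*N+1) = ((1+H^2) ^ ((1:ℝ)/4))^(2*N+1) * (Real.sqrt N)^(2*N+1) := by
      rw [hy_def, mul_pow]
    have hfirst : ((1+H^2) ^ ((1:ℝ)/4))^(2*N+1) ≤ (1+H^2) ^ ((N:ℝ) + 1/4) := by
      rw [← Real.rpow_natCast ((1+H^2) ^ ((1:ℝ)/4)) (2*N+1), ← Real.rpow_mul (by linarith)]
      apply Real.rpow_le_rpow_of_exponent_le h1H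
      push_cast
      nlinarith [Nat.cast_nonneg (α := ℝ) N]
    have hsqrtN : Real.sqrt N ≤ (N:ℝ) := by
      nlinarith [Real.sq_sqrt hNpos.le, Real.sqrt_nonneg (N:ℝ)]
    have hsecond : (Real.sqrt N)^(2*N+1) ≤ (N:ℝ)^(N+1) := by
      have h1 : (Real.sqrt N)^(2*N+1) = ((N:ℝ))^N * Real.sqrt N := by
        rw [pow_succ, pow_mul, Real.sq_sqrt hNpos.le]
      rw [h1, pow_succ]
      exact mul_le_mul_of_nonneg_left hsqrtN (by positivity)
    have hthird : (N:ℝ)^(N+1) ≤ 12^N * (Nat.factorial (N-1)) := by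
      have hfac : ((Nat.factorial N : ℝ)) = (N:ℝ) * (Nat.factorial (N-1)) := by
        rw [← Nat.mul_factorial_pred (by omega : N ≠ 0)]
        push_cast
        ring
      calc (N:ℝ)^(N+1) = (N:ℝ)^N * N := by rw [pow_succ]
      _ ≤ (3^N * Nat.factorial N) * N :=
          mul_le_mul_of_nonneg_right (pow_self_le_aux N) hNpos.le
      _ = 3^N * ((N:ℝ)^2 * (Nat.factorial (N-1))) := by rw [hfac]; ring
      _ ≤ 3^N * (4^N * (Nat.factorial (N-1))) := by
          apply mul_le_mul_of_nonneg_left ?_ (by positivity)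
          exact mul_le_mul_of_nonneg_right (sq_le_four_pow_aux N) (by positivity)
      _ = 12^N * (Nat.factorial (N-1)) := by
          rw [show (12:ℝ)^N = 3^N * 4^N by rw [← mul_pow]; norm_num]
          ring
    calc y * B^(2*N) ≤ (3+A)^(2*N) * y^(2*N+1) := by rw [← step2]; exact step1
    _ = (3+A)^(2*N) * (((1+H^2) ^ ((1:ℝ)/4))^(2*N+1) * (Real.sqrt N)^(2*N+1)) := by
        rw [hyexp]
    _ ≤ (3+A)^(2*N) * ((1+H^2) ^ ((N:ℝ) + 1/4) * ((N:ℝ)^(N+1))) := by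
        apply mul_le_mul_of_nonneg_left ?_ (by positivity)
        apply mul_le_mul hfirst hsecond (by positivity) (by positivity)
    _ ≤ (3+A)^(2*N) * ((1+H^2) ^ ((N:ℝ) + 1/4) * (12^N * (Nat.factorial (N-1)))) := by
        apply mul_le_mul_of_nonneg_left ?_ (by positivity)
        apply mul_le_mul_of_nonneg_left hthird (by positivity)
    _ = T := by
        rw [hT_def, show ((3+A):ℝ)^(2*N) = ((3+A)^2)^N by rw [← pow_mul],
          show (12*(3+A)^2)^N = 12^N * ((3+A)^2)^N by rw [mul_pow]]
        ring
  -- final chain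
  have hRHS : (Nat.factorial n : ℝ) * ((Nat.factorial (N - 1)) : ℝ) ^ n * (12*(3+A)^2) ^ (n * N) *
      (1 + H ^ 2) ^ ((n : ℝ) * ((N : ℝ) + 1/4)) = (Nat.factorial n) * T^n := by
    rw [hT_def,
      show (1 + H^2) ^ ((n:ℝ) * ((N:ℝ) + 1/4)) = ((1+H^2) ^ ((N:ℝ) + 1/4))^n by
        rw [mul_comm, Real.rpow_mul (by linarith), Real.rpow_natCast]]
    ring
  rw [hRHS]
  have hpowN : (N:ℝ) ^ (-(n:ℝ)) = ((N:ℝ)^n)⁻¹ := by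
    rw [← Real.rpow_natCast (N:ℝ) n, ← Real.rpow_neg hNpos.le]
  rw [hpowN]
  calc ((N:ℝ)^n)⁻¹ * ‖Matrix.det _‖
      ≤ ((N:ℝ)^n)⁻¹ * ((Nat.factorial n) * M^n) := by
        apply mul_le_mul_of_nonneg_left hdet (by positivity)
  _ = (Nat.factorial n) * (y * B^(2*N))^n := by
      rw [hM_def, show y * ((N:ℝ) * B^(2*N)) = (N:ℝ) * (y * B^(2*N)) by ring, mul_pow]
      field_simp
  _ ≤ (Nat.factorial n) * T^n := by
      apply mul_le_mul_of_nonneg_left (pow_le_pow_left₀ hE0 hcore n) (by positivity)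

end
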